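/- Let ρ' = (U₁⊗U₂) ρ (U₁⊗U₂)† for unitaries U₁ ∈ U(d₁), U₂ ∈ U(d₂) and a bipartite density matrix ρ on ℂ^{d₁}⊗ℂ^{d₂}. Then the correlation matrix S(ρ') = [tr(ρ' A_{ij}^{(1)†}⊗A_{kl}^{(2)†})]_{(ij),(kl)≠(00)} has the same singular values as S(ρ); in particular ‖S(ρ')‖_tr = ‖S(ρ)‖_tr. -/

import Mathlib

open Matrix
open scoped Kronecker ComplexOrder

/-- The principal basis matrices `A_{ij} = ∑_m ω^{im} E_{m, m+j}` on `ℂ^d`. -/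
noncomputable def principalBasis (d : ℕ) [NeZero d] (i j : ZMod d) :
    Matrix (ZMod d) (ZMod d) ℂ :=
  ∑ m : ZMod d, (Complex.exp (2 * Real.pi * Complex.I / d)) ^ ((i * m).val) •
    Matrix.single m (m + j) (1 : ℂ)

/-- The square root of a positive semidefinite matrix (as in the older Mathlib). -/
noncomputable def Matrix.PosSemidef.sqrt {n : Type*} {𝕜 : Type*} [Fintype n] [DecidableEq n]
    [RCLike 𝕜] {A : Matrix n n 𝕜} (hA : A.PosSemidef) : Matrix n n 𝕜 :=
  hA.1.eigenvectorUnitary.1 * diagonal ((↑) ∘ (√·) ∘ hA.1.eigenvalues) *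
    (star hA.1.eigenvectorUnitary : Matrix n n 𝕜)

/-- The trace norm `‖P‖_tr = tr √(P†P)`. -/
noncomputable def traceNorm {m n : Type*} [Fintype m] [Fintype n] [DecidableEq n]
    (P : Matrix m n ℂ) : ℝ :=
  RCLike.re (Matrix.PosSemidef.sqrt (Matrix.posSemidef_conjTranspose_mul_self P)).trace

/-- The correlation matrix `S(ρ) = [tr(ρ A_{ij}^{(1)†} ⊗ A_{kl}^{(2)†})]` of a
bipartite state, indexed by the pairs `(i,j) ≠ (0,0)` and `(k,l) ≠ (0,0)`. -/
noncomputable def corrMat (d₁ d₂ : ℕ) [NeZero d₁] [NeZero d₂]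
    (ρ : Matrix (ZMod d₁ × ZMod d₂) (ZMod d₁ × ZMod d₂) ℂ) :
    Matrix {p : ZMod d₁ × ZMod d₁ // p ≠ (0, 0)} {q : ZMod d₂ × ZMod d₂ // q ≠ (0, 0)} ℂ :=
  Matrix.of fun p q =>
    (ρ * ((principalBasis d₁ p.1.1 p.1.2)ᴴ ⊗ₖ (principalBasis d₂ q.1.1 q.1.2)ᴴ)).trace

/-! Conjugation by a unitary `U` preserves the trace pairing `tr (X† Y)` and the trace, so in the
basis `A_{ij}†` (orthogonal, hence complete by counting dimensions) it acts by a unitary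
coefficient matrix that fixes `A_{00} = 1`; it therefore restricts to a unitary on the span of the
traceless `A_{ij}†`. Conjugating `ρ` by `U₁ ⊗ U₂` thus turns `S(ρ)` into `V₁ S(ρ) V₂ᵀ` with
`V₁, V₂` unitary, so `S†S` only changes by a unitary conjugation. -/

namespace Matrix

variable {n ι : Type*} [Fintype n]

lemma trace_conjTranspose_mul_unitary_conj [DecidableEq n] {U : Matrix n n ℂ}
    (hU : U ∈ unitaryGroup n ℂ) (X Y : Matrix n n ℂ) :
    ((Uᴴ * X * U)ᴴ * (Uᴴ * Y * U)).trace = (Xᴴ * Y).trace := by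
  calc ((Uᴴ * X * U)ᴴ * (Uᴴ * Y * U)).trace = (Uᴴ * (Xᴴ * (U * Uᴴ) * Y) * U).trace := by
        simp only [conjTranspose_mul, conjTranspose_conjTranspose, Matrix.mul_assoc]
    _ = (Xᴴ * Y).trace := by
        rw [trace_mul_cycle, ← star_eq_conjTranspose, mem_unitaryGroup_iff.1 hU, Matrix.one_mul,
          Matrix.mul_one]

variable [DecidableEq ι]

def TraceOrthogonal (B : ι → Matrix n n ℂ) (c : ℂ) : Prop :=
  ∀ r s, ((B r)ᴴ * B s).trace = if r = s then c else 0

lemma TraceOrthogonal.linearIndependent [Fintype ι] {B : ι → Matrix n n ℂ} {c : ℂ}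
    (hB : TraceOrthogonal B c) (hc : c ≠ 0) : LinearIndependent ℂ B := by
  refine Fintype.linearIndependent_iff.2 fun g hg r => ?_
  have h := congrArg (fun X => ((B r)ᴴ * X).trace) hg
  simpa [Matrix.mul_sum, trace_sum, hB r, hc] using h

variable {b : Module.Basis ι ℂ (Matrix n n ℂ)} {c : ℂ}

lemma TraceOrthogonal.ne_zero (hb : TraceOrthogonal b c) (r : ι) : c ≠ 0 := fun hc =>
  b.ne_zero r <| trace_conjTranspose_mul_self_eq_zero_iff.1 <| by rw [hb r r, if_pos rfl, hc]

variable [Fintype ι]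

lemma TraceOrthogonal.trace_conjTranspose_mul (hb : TraceOrthogonal b c) (r : ι)
    (X : Matrix n n ℂ) : ((b r)ᴴ * X).trace = c * b.repr X r := by
  conv_lhs => rw [← b.sum_repr X]
  simp only [Matrix.mul_sum, Matrix.mul_smul, trace_sum, trace_smul, hb r, smul_eq_mul]
  simp [mul_comm]

lemma TraceOrthogonal.trace_conjTranspose_mul_eq_sum (hb : TraceOrthogonal b c)
    (X Y : Matrix n n ℂ) :
    (Xᴴ * Y).trace = c * ∑ r, star (b.repr X r) * b.repr Y r := by
  conv_lhs => rw [← b.sum_repr X]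
  simp only [conjTranspose_sum, conjTranspose_smul, Matrix.sum_mul, Matrix.smul_mul, trace_sum,
    trace_smul, hb.trace_conjTranspose_mul, smul_eq_mul, Finset.mul_sum]
  exact Finset.sum_congr rfl fun r _ => by ring

end Matrix

namespace Module.Basis

open Matrix

variable {n ι : Type*} [Fintype n] [Fintype ι] (b : Basis ι ℂ (Matrix n n ℂ))

noncomputable def conjMatrix (U : Matrix n n ℂ) : Matrix ι ι ℂ :=
  of fun p r => b.repr (Uᴴ * b p * U) r

lemma conjTranspose_mul_mul_eq_sum (U : Matrix n n ℂ) (p : ι) :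
    Uᴴ * b p * U = ∑ r, b.conjMatrix U p r • b r :=
  (b.sum_repr _).symm

variable {b} [DecidableEq n] [DecidableEq ι] {c : ℂ} {U : Matrix n n ℂ}

lemma conjMatrix_mem_unitaryGroup (hb : TraceOrthogonal b c) (hU : U ∈ unitaryGroup n ℂ) :
    b.conjMatrix U ∈ unitaryGroup ι ℂ := by
  rw [mem_unitaryGroup_iff]
  ext p q
  have hc := hb.ne_zero p
  have h := hb.trace_conjTranspose_mul_eq_sum (Uᴴ * b q * U) (Uᴴ * b p * U)
  rw [trace_conjTranspose_mul_unitary_conj hU, hb q p] at h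
  rw [star_eq_conjTranspose, mul_apply, one_apply]
  simp only [conjTranspose_apply, conjMatrix, of_apply, mul_comm (b.repr _ _)] at h ⊢
  split_ifs at h ⊢ with hpq hqp hqp
  · exact (mul_eq_left₀ hc).1 h.symm
  · exact absurd hpq.symm hqp
  · exact absurd hqp.symm hpq
  · exact (mul_eq_zero.1 h.symm).resolve_left hc

lemma conjMatrix_apply_eq_zero (hb : TraceOrthogonal b c) (hU : U ∈ unitaryGroup n ℂ) {r₀ : ι}
    (h₀ : b r₀ = 1) {p : ι} (hp : p ≠ r₀) : b.conjMatrix U p r₀ = 0 := by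
  have h : c * b.conjMatrix U p r₀ = 0 := by
    rw [conjMatrix, of_apply, ← hb.trace_conjTranspose_mul, h₀, conjTranspose_one,
      Matrix.one_mul, trace_mul_cycle, ← star_eq_conjTranspose, mem_unitaryGroup_iff.1 hU,
      Matrix.one_mul, ← Matrix.one_mul (b p), ← conjTranspose_one, ← h₀, hb r₀ p,
      if_neg hp.symm]
  exact (mul_eq_zero.1 h).resolve_left (hb.ne_zero p)

end Module.Basis

namespace Matrix

section Correlation

variable {n₁ n₂ ι₁ ι₂ : Type*} [Fintype n₁] [Fintype n₂]

noncomputable def correlation (b₁ : ι₁ → Matrix n₁ n₁ ℂ) (b₂ : ι₂ → Matrix n₂ n₂ ℂ)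
    (ρ : Matrix (n₁ × n₂) (n₁ × n₂) ℂ) : Matrix ι₁ ι₂ ℂ :=
  of fun r s => (ρ * (b₁ r ⊗ₖ b₂ s)).trace

variable [Fintype ι₁] [Fintype ι₂]

lemma trace_mul_sum_smul_kronecker_sum_smul (ρ : Matrix (n₁ × n₂) (n₁ × n₂) ℂ)
    (x : ι₁ → ℂ) (y : ι₂ → ℂ) (b₁ : ι₁ → Matrix n₁ n₁ ℂ) (b₂ : ι₂ → Matrix n₂ n₂ ℂ) :
    (ρ * ((∑ r, x r • b₁ r) ⊗ₖ ∑ s, y s • b₂ s)).trace =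
      ∑ r, ∑ s, x r * y s * (ρ * (b₁ r ⊗ₖ b₂ s)).trace := by
  have hsum : (∑ r, x r • b₁ r) ⊗ₖ ∑ s, y s • b₂ s =
      ∑ r, ∑ s, (x r * y s) • (b₁ r ⊗ₖ b₂ s) := by
    ext ⟨i, j⟩ ⟨k, l⟩
    simp only [kroneckerMap_apply, sum_apply, smul_apply, smul_eq_mul, Finset.sum_mul_sum]
    exact Finset.sum_congr rfl fun r _ => Finset.sum_congr rfl fun s _ => by ring
  simp only [hsum, Matrix.mul_sum, Matrix.mul_smul, trace_sum, trace_smul, smul_eq_mul]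

lemma correlation_kronecker_conj (b₁ : Module.Basis ι₁ ℂ (Matrix n₁ n₁ ℂ))
    (b₂ : Module.Basis ι₂ ℂ (Matrix n₂ n₂ ℂ)) (ρ : Matrix (n₁ × n₂) (n₁ × n₂) ℂ)
    (U₁ : Matrix n₁ n₁ ℂ) (U₂ : Matrix n₂ n₂ ℂ) :
    correlation b₁ b₂ ((U₁ ⊗ₖ U₂) * ρ * (U₁ ⊗ₖ U₂)ᴴ) =
      b₁.conjMatrix U₁ * correlation b₁ b₂ ρ * (b₂.conjMatrix U₂)ᵀ := by
  ext p q
  have hconj : (U₁ ⊗ₖ U₂)ᴴ * (b₁ p ⊗ₖ b₂ q) * (U₁ ⊗ₖ U₂) =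
      (U₁ᴴ * b₁ p * U₁) ⊗ₖ (U₂ᴴ * b₂ q * U₂) := by
    rw [conjTranspose_kronecker, ← mul_kronecker_mul, ← mul_kronecker_mul]
  calc correlation b₁ b₂ ((U₁ ⊗ₖ U₂) * ρ * (U₁ ⊗ₖ U₂)ᴴ) p q
      = (ρ * ((U₁ ⊗ₖ U₂)ᴴ * (b₁ p ⊗ₖ b₂ q) * (U₁ ⊗ₖ U₂))).trace := by
        simp only [correlation, of_apply, Matrix.mul_assoc]
        rw [trace_mul_comm]
        simp only [Matrix.mul_assoc]
    _ = ∑ r, ∑ s, b₁.conjMatrix U₁ p r * b₂.conjMatrix U₂ q s * correlation b₁ b₂ ρ r s := by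
        rw [hconj, b₁.conjTranspose_mul_mul_eq_sum, b₂.conjTranspose_mul_mul_eq_sum,
          trace_mul_sum_smul_kronecker_sum_smul]
        rfl
    _ = (b₁.conjMatrix U₁ * correlation b₁ b₂ ρ * (b₂.conjMatrix U₂)ᵀ) p q := by
        simp only [mul_apply, transpose_apply, Finset.sum_mul]
        rw [Finset.sum_comm]
        exact Finset.sum_congr rfl fun r _ => Finset.sum_congr rfl fun s _ => by ring

end Correlation

section DeleteIndex

/- The index maps `Subtype.val` carry their types explicitly: otherwise `*` between the
submatrices elaborates through the default `HMul` instance of `CStarMatrix`. -/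

variable {ι κ α : Type*} [Fintype ι] [DecidableEq ι]

lemma mul_eq_submatrix_mul_submatrix_ne {m : Type*} [NonUnitalNonAssocSemiring α]
    (P : Matrix m ι α) (F : Matrix ι κ α) {r₀ : ι} (hP : ∀ p, P p r₀ = 0) :
    P * F = P.submatrix id (Subtype.val : {r // r ≠ r₀} → ι) *
      F.submatrix (Subtype.val : {r // r ≠ r₀} → ι) id := by
  ext p q
  rw [mul_apply, mul_apply, Fintype.sum_eq_add_sum_subtype_ne _ r₀, hP, zero_mul, zero_add]
  rfl

lemma submatrix_ne_mem_unitaryGroup [CommRing α] [StarRing α] {M : Matrix ι ι α}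
    (hM : M ∈ unitaryGroup ι α) {r₀ : ι} (h : ∀ p ≠ r₀, M p r₀ = 0) :
    M.submatrix (Subtype.val : {r // r ≠ r₀} → ι) Subtype.val ∈
      unitaryGroup {r // r ≠ r₀} α := by
  have hsplit := mul_eq_submatrix_mul_submatrix_ne
    (M.submatrix (Subtype.val : {r // r ≠ r₀} → ι) id)
    (Mᴴ.submatrix id (Subtype.val : {r // r ≠ r₀} → ι)) fun p => h p p.2
  rw [← submatrix_mul _ _ _ id _ Function.bijective_id, ← star_eq_conjTranspose,
    mem_unitaryGroup_iff.1 hM, submatrix_one _ Subtype.val_injective] at hsplit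
  rw [mem_unitaryGroup_iff, star_eq_conjTranspose, conjTranspose_submatrix, hsplit]
  rfl

lemma submatrix_ne_mul_mul_transpose [Fintype κ] [DecidableEq κ] [CommSemiring α]
    (P : Matrix ι ι α) (F : Matrix ι κ α) (Q : Matrix κ κ α) {r₀ : ι} {s₀ : κ}
    (hP : ∀ p ≠ r₀, P p r₀ = 0) (hQ : ∀ q ≠ s₀, Q q s₀ = 0) :
    (P * F * Qᵀ).submatrix (Subtype.val : {r // r ≠ r₀} → ι) (Subtype.val : {s // s ≠ s₀} → κ) =
      P.submatrix (Subtype.val : {r // r ≠ r₀} → ι) (Subtype.val : {r // r ≠ r₀} → ι) *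
        F.submatrix (Subtype.val : {r // r ≠ r₀} → ι) (Subtype.val : {s // s ≠ s₀} → κ) *
        (Q.submatrix (Subtype.val : {s // s ≠ s₀} → κ) (Subtype.val : {s // s ≠ s₀} → κ))ᵀ := by
  ext p q
  simp only [mul_apply, submatrix_apply, transpose_apply]
  simp_rw [Fintype.sum_eq_add_sum_subtype_ne _ r₀, Fintype.sum_eq_add_sum_subtype_ne _ s₀,
    hP _ p.2, hQ _ q.2]
  simp

end DeleteIndex

section UnitaryInvariance

variable {m n : Type*} [Fintype m] [Fintype n]

lemma conjTranspose_mul_self_unitary_mul_mul [DecidableEq m] {α : Type*} [CommRing α]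
    [StarRing α] (P : Matrix m n α) {V : Matrix m m α} {W : Matrix n n α}
    (hV : V ∈ unitaryGroup m α) :
    (V * P * W)ᴴ * (V * P * W) = Wᴴ * (Pᴴ * P) * W := by
  have hVV : Vᴴ * V = 1 := mem_unitaryGroup_iff'.1 hV
  simp only [conjTranspose_mul, Matrix.mul_assoc]
  rw [← Matrix.mul_assoc Vᴴ V, hVV, Matrix.one_mul]

lemma charpoly_conjTranspose_mul_self_unitary_mul_mul [DecidableEq m] [DecidableEq n]
    {α : Type*} [CommRing α] [StarRing α] (P : Matrix m n α) {V : Matrix m m α}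
    {W : Matrix n n α} (hV : V ∈ unitaryGroup m α) (hW : W ∈ unitaryGroup n α) :
    ((V * P * W)ᴴ * (V * P * W)).charpoly = (Pᴴ * P).charpoly := by
  rw [conjTranspose_mul_self_unitary_mul_mul P hV, Matrix.mul_assoc, charpoly_mul_comm,
    Matrix.mul_assoc, ← star_eq_conjTranspose, mem_unitaryGroup_iff.1 hW, Matrix.mul_one]

open scoped MatrixOrder

variable [DecidableEq n]

lemma PosSemidef.sqrt_eq_cfcSqrt {A : Matrix n n ℂ} (hA : A.PosSemidef) :
    hA.sqrt = CFC.sqrt A := by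
  rw [CFC.sqrt_eq_real_sqrt A hA.nonneg, cfcₙ_eq_cfc, hA.1.cfc_eq, IsHermitian.cfc,
    PosSemidef.sqrt]
  rfl

lemma cfcSqrt_unitary_conj {A W : Matrix n n ℂ} (hA : A.PosSemidef)
    (hW : W ∈ unitaryGroup n ℂ) : CFC.sqrt (Wᴴ * A * W) = Wᴴ * CFC.sqrt A * W := by
  refine CFC.sqrt_unique ?_ (star_left_conjugate_nonneg (CFC.sqrt_nonneg A) W)
  calc Wᴴ * CFC.sqrt A * W * (Wᴴ * CFC.sqrt A * W)
      = Wᴴ * (CFC.sqrt A * (W * star W) * CFC.sqrt A) * W := by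
        simp only [star_eq_conjTranspose, Matrix.mul_assoc]
    _ = Wᴴ * A * W := by
        rw [mem_unitaryGroup_iff.1 hW, Matrix.mul_one, CFC.sqrt_mul_sqrt_self A hA.nonneg]

lemma traceNorm_eq_re_trace_cfcSqrt (P : Matrix m n ℂ) :
    traceNorm P = RCLike.re (CFC.sqrt (Pᴴ * P)).trace := by
  rw [traceNorm, PosSemidef.sqrt_eq_cfcSqrt]

lemma traceNorm_unitary_mul_mul [DecidableEq m] (P : Matrix m n ℂ) {V : Matrix m m ℂ}
    {W : Matrix n n ℂ} (hV : V ∈ unitaryGroup m ℂ) (hW : W ∈ unitaryGroup n ℂ) :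
    traceNorm (V * P * W) = traceNorm P := by
  rw [traceNorm_eq_re_trace_cfcSqrt, traceNorm_eq_re_trace_cfcSqrt,
    conjTranspose_mul_self_unitary_mul_mul P hV,
    cfcSqrt_unitary_conj (posSemidef_conjTranspose_mul_self P) hW, trace_mul_cycle,
    ← star_eq_conjTranspose, mem_unitaryGroup_iff.1 hW, Matrix.one_mul]

end UnitaryInvariance

end Matrix

section PrincipalBasis

open Matrix

variable (d : ℕ) [NeZero d]

lemma exp_pow_val_eq_stdAddChar (k : ZMod d) :
    Complex.exp (2 * Real.pi * Complex.I / d) ^ k.val = ZMod.stdAddChar k := by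
  rw [ZMod.stdAddChar_apply, ZMod.toCircle_apply, ← Complex.exp_nat_mul]
  ring_nf

lemma principalBasis_apply (i j a b : ZMod d) :
    principalBasis d i j a b = if b = a + j then ZMod.stdAddChar (i * a) else 0 := by
  simp only [principalBasis, Matrix.sum_apply, Matrix.smul_apply, single_apply,
    exp_pow_val_eq_stdAddChar, smul_eq_mul, mul_ite, mul_one, mul_zero]
  rw [Finset.sum_eq_single a (fun m _ hm => by simp [hm]) (by simp)]
  simp [eq_comm]

lemma principalBasis_zero_zero : principalBasis d 0 0 = 1 := by
  ext a b
  simp [principalBasis_apply, one_apply, eq_comm]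

lemma traceOrthogonal_principalBasis_conjTranspose :
    TraceOrthogonal (fun r : ZMod d × ZMod d => (principalBasis d r.1 r.2)ᴴ) d := by
  rintro ⟨i, j⟩ ⟨k, l⟩
  simp only [conjTranspose_conjTranspose, trace, diag_apply, mul_apply, conjTranspose_apply,
    principalBasis_apply, Prod.mk.injEq, ite_mul, zero_mul, Finset.sum_ite_eq', Finset.mem_univ,
    if_true, add_right_inj]
  by_cases hjl : j = l
  · have hchar : ∀ a, ZMod.stdAddChar (i * a) * star (ZMod.stdAddChar (k * a)) =
        (ZMod.stdAddChar (a * (i - k)) : ℂ) := fun a => by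
      rw [Complex.star_def, ← AddChar.map_neg_eq_conj, ← AddChar.map_add_eq_mul]
      ring_nf
    simp only [hjl, if_true, hchar, AddChar.sum_mulShift _ (ZMod.isPrimitive_stdAddChar d),
      sub_eq_zero, ZMod.card, and_true]
    rw [Nat.cast_ite, Nat.cast_zero]
  · simp [hjl]

noncomputable def adjointPrincipalBasis :
    Module.Basis (ZMod d × ZMod d) ℂ (Matrix (ZMod d) (ZMod d) ℂ) :=
  basisOfLinearIndependentOfCardEqFinrank' _
    ((traceOrthogonal_principalBasis_conjTranspose d).linearIndependent (by simp [NeZero.ne d]))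
    (by simp [Module.finrank_matrix, ZMod.card])

@[simp]
lemma coe_adjointPrincipalBasis :
    ⇑(adjointPrincipalBasis d) = fun r : ZMod d × ZMod d => (principalBasis d r.1 r.2)ᴴ :=
  coe_basisOfLinearIndependentOfCardEqFinrank' _ _ _

end PrincipalBasis

section CorrelationMatrix

open Matrix

variable {d : ℕ} [NeZero d]

lemma traceOrthogonal_adjointPrincipalBasis : TraceOrthogonal (adjointPrincipalBasis d) d := by
  rw [coe_adjointPrincipalBasis]
  exact traceOrthogonal_principalBasis_conjTranspose d

variable (d) in
noncomputable def reducedConjMatrix (U : Matrix (ZMod d) (ZMod d) ℂ) :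
    Matrix {p : ZMod d × ZMod d // p ≠ (0, 0)} {p : ZMod d × ZMod d // p ≠ (0, 0)} ℂ :=
  ((adjointPrincipalBasis d).conjMatrix U).submatrix Subtype.val Subtype.val

lemma conjMatrix_adjointPrincipalBasis_apply_zero {U : Matrix (ZMod d) (ZMod d) ℂ}
    (hU : U ∈ unitaryGroup (ZMod d) ℂ) {p : ZMod d × ZMod d} (hp : p ≠ (0, 0)) :
    (adjointPrincipalBasis d).conjMatrix U p (0, 0) = 0 :=
  Module.Basis.conjMatrix_apply_eq_zero traceOrthogonal_adjointPrincipalBasis hU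
    (by simp [principalBasis_zero_zero]) hp

lemma reducedConjMatrix_mem_unitaryGroup {U : Matrix (ZMod d) (ZMod d) ℂ}
    (hU : U ∈ unitaryGroup (ZMod d) ℂ) :
    reducedConjMatrix d U ∈ unitaryGroup {p : ZMod d × ZMod d // p ≠ (0, 0)} ℂ :=
  submatrix_ne_mem_unitaryGroup
    (Module.Basis.conjMatrix_mem_unitaryGroup traceOrthogonal_adjointPrincipalBasis hU)
    fun _ => conjMatrix_adjointPrincipalBasis_apply_zero hU

variable {d₁ d₂ : ℕ} [NeZero d₁] [NeZero d₂]

lemma corrMat_eq_submatrix_correlation (ρ : Matrix (ZMod d₁ × ZMod d₂) (ZMod d₁ × ZMod d₂) ℂ) :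
    corrMat d₁ d₂ ρ = (correlation (adjointPrincipalBasis d₁) (adjointPrincipalBasis d₂)
      ρ).submatrix Subtype.val Subtype.val := by
  ext p q
  simp [corrMat, correlation]

lemma corrMat_kronecker_conj (ρ : Matrix (ZMod d₁ × ZMod d₂) (ZMod d₁ × ZMod d₂) ℂ)
    {U₁ : Matrix (ZMod d₁) (ZMod d₁) ℂ} {U₂ : Matrix (ZMod d₂) (ZMod d₂) ℂ}
    (hU₁ : U₁ ∈ unitaryGroup (ZMod d₁) ℂ) (hU₂ : U₂ ∈ unitaryGroup (ZMod d₂) ℂ) :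
    corrMat d₁ d₂ ((U₁ ⊗ₖ U₂) * ρ * (U₁ ⊗ₖ U₂)ᴴ) =
      reducedConjMatrix d₁ U₁ * corrMat d₁ d₂ ρ * (reducedConjMatrix d₂ U₂)ᵀ := by
  rw [corrMat_eq_submatrix_correlation, correlation_kronecker_conj,
    submatrix_ne_mul_mul_transpose _ _ _
      (fun _ => conjMatrix_adjointPrincipalBasis_apply_zero hU₁)
      (fun _ => conjMatrix_adjointPrincipalBasis_apply_zero hU₂),
    ← corrMat_eq_submatrix_correlation]
  rfl

end CorrelationMatrix

theorem corrMat_unitary_invariant_general (d₁ d₂ : ℕ) [NeZero d₁] [NeZero d₂]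
    (ρ : Matrix (ZMod d₁ × ZMod d₂) (ZMod d₁ × ZMod d₂) ℂ)
    (U₁ : Matrix (ZMod d₁) (ZMod d₁) ℂ) (U₂ : Matrix (ZMod d₂) (ZMod d₂) ℂ)
    (hU₁ : U₁ ∈ Matrix.unitaryGroup (ZMod d₁) ℂ)
    (hU₂ : U₂ ∈ Matrix.unitaryGroup (ZMod d₂) ℂ) :
    ((corrMat d₁ d₂ ((U₁ ⊗ₖ U₂) * ρ * (U₁ ⊗ₖ U₂)ᴴ))ᴴ *
        corrMat d₁ d₂ ((U₁ ⊗ₖ U₂) * ρ * (U₁ ⊗ₖ U₂)ᴴ)).charpoly =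
      ((corrMat d₁ d₂ ρ)ᴴ * corrMat d₁ d₂ ρ).charpoly ∧
    traceNorm (corrMat d₁ d₂ ((U₁ ⊗ₖ U₂) * ρ * (U₁ ⊗ₖ U₂)ᴴ)) =
      traceNorm (corrMat d₁ d₂ ρ) := by
  have hV := reducedConjMatrix_mem_unitaryGroup hU₁
  have hW := transpose_mem_unitaryGroup_iff.2 (reducedConjMatrix_mem_unitaryGroup hU₂)
  rw [corrMat_kronecker_conj ρ hU₁ hU₂]
  exact ⟨charpoly_conjTranspose_mul_self_unitary_mul_mul _ hV hW,
    traceNorm_unitary_mul_mul _ hV hW⟩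

/-- If `ρ' = (U₁ ⊗ U₂) ρ (U₁ ⊗ U₂)†` for unitaries `U₁, U₂` and a density
matrix `ρ`, then `S(ρ')` has the same singular values as `S(ρ)` (the Hermitian
matrices `S(ρ')† S(ρ')` and `S(ρ)† S(ρ)` have the same characteristic
polynomial); in particular `‖S(ρ')‖_tr = ‖S(ρ)‖_tr`. -/
theorem corrMat_unitary_invariant (d₁ d₂ : ℕ) [NeZero d₁] [NeZero d₂]
    (ρ : Matrix (ZMod d₁ × ZMod d₂) (ZMod d₁ × ZMod d₂) ℂ)
    (hρ : ρ.PosSemidef) (hρtr : ρ.trace = 1)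
    (U₁ : Matrix (ZMod d₁) (ZMod d₁) ℂ) (U₂ : Matrix (ZMod d₂) (ZMod d₂) ℂ)
    (hU₁ : U₁ ∈ Matrix.unitaryGroup (ZMod d₁) ℂ)
    (hU₂ : U₂ ∈ Matrix.unitaryGroup (ZMod d₂) ℂ) :
    ((corrMat d₁ d₂ ((U₁ ⊗ₖ U₂) * ρ * (U₁ ⊗ₖ U₂)ᴴ))ᴴ *
        corrMat d₁ d₂ ((U₁ ⊗ₖ U₂) * ρ * (U₁ ⊗ₖ U₂)ᴴ)).charpoly =
      ((corrMat d₁ d₂ ρ)ᴴ * corrMat d₁ d₂ ρ).charpoly ∧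
    traceNorm (corrMat d₁ d₂ ((U₁ ⊗ₖ U₂) * ρ * (U₁ ⊗ₖ U₂)ᴴ)) =
      traceNorm (corrMat d₁ d₂ ρ) :=
  corrMat_unitary_invariant_general d₁ d₂ ρ U₁ U₂ hU₁ hU₂
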